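/- arXiv:2003.08877 — 2 statements merged into one kernel-verified Lean document; each statement's English description precedes it below -/
import Mathlib

section
/- Let (C, ⊑) and (A, ≤) be complete lattices, let E_C : x =_η f^C(x) and E_A : x =_η f^A(x) be systems of m fixpoint equations over C and A with the same markers and with solutions s^C ∈ C^m and s^A ∈ A^m, and let ⟨α_i, γ_i⟩ : C → A be Galois connections for i = 1,…,m. If f^A ∘ Πα ≤ Πα ∘ f^C (pointwise) and α_i is co-continuous and co-strict for each index i with η_i = ν, then s^A ≤ Πα(s^C). -/
/-- Least fixpoint of `f` (Knaster–Tarski construction). -/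
def muFix {L : Type*} [CompleteLattice L] (f : L → L) : L := sInf {x | f x ≤ x}

/-- Greatest fixpoint of `f` (Knaster–Tarski construction). -/
def nuFix {L : Type*} [CompleteLattice L] (f : L → L) : L := sSup {x | x ≤ f x}
/-- `g` is (directed-)continuous: it preserves joins of (nonempty) directed sets. -/
def DirContinuous {L M : Type*} [CompleteLattice L] [CompleteLattice M] (g : L → M) : Prop :=
  ∀ S : Set L, S.Nonempty → DirectedOn (· ≤ ·) S → g (sSup S) = sSup (g '' S)

/-- `g` is strict: it maps bottom to bottom. -/
def BotStrict {L M : Type*} [CompleteLattice L] [CompleteLattice M] (g : L → M) : Prop :=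
  g ⊥ = ⊥

/-- `g` is co-continuous: it preserves meets of (nonempty) codirected sets. -/
def CodirContinuous {L M : Type*} [CompleteLattice L] [CompleteLattice M] (g : L → M) : Prop :=
  ∀ S : Set L, S.Nonempty → DirectedOn (· ≥ ·) S → g (sInf S) = sInf (g '' S)

/-- `g` is co-strict: it maps top to top. -/
def TopStrict {L M : Type*} [CompleteLattice L] [CompleteLattice M] (g : L → M) : Prop :=
  g ⊤ = ⊤
/-- Marker of a fixpoint equation: least (`mu`) or greatest (`nu`) fixpoint. -/
inductive EqMarker : Type
  | mu
  | nu

/-- Solution of a system of `m` fixpoint equations `x =_η f(x)` over a complete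
lattice `L`, defined by recursion on `m`: the last variable is treated as a
parameter, the first `m-1` equations are solved recursively, the resulting
one-variable equation is solved by taking the least or greatest fixpoint
according to the marker of the last equation, and the value is substituted
back. -/
def eqSol {L : Type*} [CompleteLattice L] :
    (m : ℕ) → ((Fin m → L) → Fin m → L) → (Fin m → EqMarker) → (Fin m → L)
  | 0, _, _ => fun i => i.elim0
  | m + 1, f, η =>
    let solPrev : L → Fin m → L := fun x =>
      eqSol m (fun v j => f (Fin.snoc v x) j.castSucc) (fun j => η j.castSucc)
    let g : L → L := fun x => f (Fin.snoc (solPrev x) x) (Fin.last m)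
    let slast : L :=
      match η (Fin.last m) with
      | EqMarker.mu => muFix g
      | EqMarker.nu => nuFix g
    Fin.snoc (solPrev slast) slast

-- Auxiliary lemmas


lemma muFix_le_of_prefix {L : Type*} [CompleteLattice L] {g : L → L} {x : L} (h : g x ≤ x) :
    muFix g ≤ x := sInf_le h
lemma prefix_muFix {L : Type*} [CompleteLattice L] {g : L → L} (hg : Monotone g) :
    g (muFix g) ≤ muFix g := le_sInf fun x hx => (hg (sInf_le hx)).trans hx
lemma postfix_nuFix {L : Type*} [CompleteLattice L] {g : L → L} (hg : Monotone g) :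
    nuFix g ≤ g (nuFix g) := sSup_le fun x hx => hx.trans (hg (le_sSup hx))
lemma muFix_mono {L : Type*} [CompleteLattice L] {g g' : L → L} (h : ∀ x, g x ≤ g' x) :
    muFix g ≤ muFix g' := sInf_le_sInf fun x hx => (h x).trans hx
lemma nuFix_mono {L : Type*} [CompleteLattice L] {g g' : L → L} (h : ∀ x, g x ≤ g' x) :
    nuFix g ≤ nuFix g' := sSup_le_sSup fun x hx => le_trans hx (h x)

lemma snoc_le_snoc' {L : Type*} [Preorder L] {m : ℕ} {v v' : Fin m → L} {x x' : L}
    (hv : v ≤ v') (hx : x ≤ x') : (Fin.snoc v x : Fin (m+1) → L) ≤ Fin.snoc v' x' := by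
  intro i
  induction i using Fin.lastCases with
  | last => simpa using hx
  | cast j => simpa using hv j

lemma nuFix_le_alpha' {C A : Type*} [CompleteLattice C] [CompleteLattice A]
    {gC : C → C} {gA : A → A} (hgC : Monotone gC) (hgA : Monotone gA)
    {α : C → A} (hcc : CodirContinuous α) (hts : TopStrict α)
    (h : ∀ c, gA (α c) ≤ α (gC c)) : nuFix gA ≤ α (nuFix gC) := by
  set F : C →o C := ⟨gC, hgC⟩ with hF
  have key : ∀ a : Ordinal, nuFix gA ≤ α (OrdinalApprox.gfpApprox F ⊤ a) := by
    intro a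
    induction a using Ordinal.induction with
    | h a ih =>
      rw [OrdinalApprox.gfpApprox]
      set S : Set C := {x | ∃ b : Ordinal, ∃ _ : b < a, F (OrdinalApprox.gfpApprox F ⊤ b) = x}
        with hS
      have hne : (S ∪ {⊤}).Nonempty := ⟨⊤, Or.inr rfl⟩
      have hcod : DirectedOn (· ≥ ·) (S ∪ {⊤}) := by
        rintro x hx y hy
        rcases hx with ⟨b, hb, rfl⟩ | hx
        · rcases hy with ⟨b', hb', rfl⟩ | hy
          · rcases le_total b b' with hbb | hbb
            · exact ⟨F (OrdinalApprox.gfpApprox F ⊤ b'), Or.inl ⟨b', hb', rfl⟩,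
                hgC (OrdinalApprox.gfpApprox_anti_right F (x := ⊤) hbb), le_rfl⟩
            · exact ⟨F (OrdinalApprox.gfpApprox F ⊤ b), Or.inl ⟨b, hb, rfl⟩,
                le_rfl, hgC (OrdinalApprox.gfpApprox_anti_right F (x := ⊤) hbb)⟩
          · exact ⟨F (OrdinalApprox.gfpApprox F ⊤ b), Or.inl ⟨b, hb, rfl⟩, le_rfl,
              by simp at hy; simp [hy]⟩
        · simp at hx; subst hx
          exact ⟨y, hy, hy.elim (fun _ => le_top) (fun hy => by simp_all), le_rfl⟩
      have hSinf : (⊤ : C) ⊓ ⨅ b, ⨅ (_ : b < a), F (OrdinalApprox.gfpApprox F ⊤ b)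
          = sInf (S ∪ {⊤}) := by
        rw [sInf_union, sInf_singleton, inf_top_eq, top_inf_eq]
        apply le_antisymm
        · exact le_sInf (by rintro _ ⟨b, hb, rfl⟩; exact iInf₂_le b hb)
        · exact le_iInf₂ fun b hb => sInf_le ⟨b, hb, rfl⟩
      rw [hSinf]
      rw [hcc _ hne hcod]
      apply le_sInf
      rintro x ⟨c, hc, rfl⟩
      rcases hc with ⟨b, hb, rfl⟩ | hc
      · calc nuFix gA ≤ gA (nuFix gA) := postfix_nuFix hgA
          _ ≤ gA (α (OrdinalApprox.gfpApprox F ⊤ b)) := hgA (ih b hb)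
          _ ≤ α (gC (OrdinalApprox.gfpApprox F ⊤ b)) := h _
      · simp at hc; subst hc; rw [hts]; exact le_top
  calc nuFix gA ≤ α (OrdinalApprox.gfpApprox F ⊤ (Order.succ (Cardinal.mk C)).ord) := key _
    _ = α (OrderHom.gfp F) := by rw [OrdinalApprox.gfpApprox_ord_eq_gfp]
    _ = α (nuFix gC) := rfl

lemma eqSol_mono' {L : Type*} [CompleteLattice L] :
    ∀ (m : ℕ) (f f' : (Fin m → L) → Fin m → L) (η : Fin m → EqMarker),
      Monotone f' → (∀ v, f v ≤ f' v) → eqSol m f η ≤ eqSol m f' η := by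
  intro m
  induction m with
  | zero => intro f f' η _ _ i; exact i.elim0
  | succ m ih =>
    intro f f' η hf' hle
    simp only [eqSol]
    set solPrev : L → Fin m → L := fun x =>
      eqSol m (fun v j => f (Fin.snoc v x) j.castSucc) (fun j => η j.castSucc) with hsp
    set solPrev' : L → Fin m → L := fun x =>
      eqSol m (fun v j => f' (Fin.snoc v x) j.castSucc) (fun j => η j.castSucc) with hsp'
    have hsple : ∀ x x' : L, x ≤ x' → solPrev x ≤ solPrev' x' := by
      intro x x' hx
      apply ih
      · intro v v' hv j
        exact hf' (snoc_le_snoc' hv le_rfl) j.castSucc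
      · intro v j
        exact (hle _ _).trans (hf' (snoc_le_snoc' le_rfl hx) j.castSucc)
    have hg : ∀ x x' : L, x ≤ x' →
        f (Fin.snoc (solPrev x) x) (Fin.last m) ≤ f' (Fin.snoc (solPrev' x') x') (Fin.last m) :=
      fun x x' hx => (hle _ _).trans (hf' (snoc_le_snoc' (hsple x x' hx) hx) _)
    have hslast :
        (match η (Fin.last m) with
         | EqMarker.mu => muFix (fun x => f (Fin.snoc (solPrev x) x) (Fin.last m))
         | EqMarker.nu => nuFix (fun x => f (Fin.snoc (solPrev x) x) (Fin.last m))) ≤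
        (match η (Fin.last m) with
         | EqMarker.mu => muFix (fun x => f' (Fin.snoc (solPrev' x) x) (Fin.last m))
         | EqMarker.nu => nuFix (fun x => f' (Fin.snoc (solPrev' x) x) (Fin.last m))) := by
      cases η (Fin.last m)
      · exact muFix_mono fun x => hg x x le_rfl
      · exact nuFix_mono fun x => hg x x le_rfl
    exact snoc_le_snoc' (hsple _ _ hslast) hslast

lemma galois_key {C A : Type*} [CompleteLattice C] [CompleteLattice A] :
    ∀ (m : ℕ) (fC : (Fin m → C) → Fin m → C) (fA : (Fin m → A) → Fin m → A),
      Monotone fC → Monotone fA → ∀ (η : Fin m → EqMarker) (α : Fin m → C → A),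
      (∀ i, Monotone (α i)) →
      (∀ (v : Fin m → C) (i : Fin m), fA (fun j => α j (v j)) i ≤ α i (fC v i)) →
      (∀ i, η i = EqMarker.nu → CodirContinuous (α i) ∧ TopStrict (α i)) →
      ∀ i, eqSol m fA η i ≤ α i (eqSol m fC η i) := by
  intro m
  induction m with
  | zero => intro _ _ _ _ _ _ _ _ _ i; exact i.elim0
  | succ m ih =>
    intro fC fA hfC hfA η α hαm hcompl hν
    simp only [eqSol]
    set solPrevC : C → Fin m → C := fun x =>
      eqSol m (fun v j => fC (Fin.snoc v x) j.castSucc) (fun j => η j.castSucc) with hspC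
    set solPrevA : A → Fin m → A := fun x =>
      eqSol m (fun v j => fA (Fin.snoc v x) j.castSucc) (fun j => η j.castSucc) with hspA
    set gC : C → C := fun x => fC (Fin.snoc (solPrevC x) x) (Fin.last m) with hgCdef
    set gA : A → A := fun x => fA (Fin.snoc (solPrevA x) x) (Fin.last m) with hgAdef
    -- snoc/alpha exchange
    have hexch : ∀ (v : Fin m → C) (xC : C),
        (Fin.snoc (fun k => α k.castSucc (v k)) (α (Fin.last m) xC) : Fin (m+1) → A)
          = fun k => α k ((Fin.snoc v xC : Fin (m+1) → C) k) := by
      intro v xC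
      funext k
      induction k using Fin.lastCases with
      | last => simp
      | cast j => simp
    -- sub-system induction hypothesis
    have IHsub : ∀ (xC : C) (xA : A), xA ≤ α (Fin.last m) xC →
        ∀ j, solPrevA xA j ≤ α j.castSucc (solPrevC xC j) := by
      intro xC xA hx
      apply ih (fun v j => fC (Fin.snoc v xC) j.castSucc)
        (fun v j => fA (Fin.snoc v xA) j.castSucc)
        (fun v v' hv j => hfC (snoc_le_snoc' hv le_rfl) j.castSucc)
        (fun v v' hv j => hfA (snoc_le_snoc' hv le_rfl) j.castSucc)
        (fun j => η j.castSucc) (fun j => α j.castSucc)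
        (fun j => hαm j.castSucc)
      · intro v j
        calc fA (Fin.snoc (fun k => α k.castSucc (v k)) xA) j.castSucc
            ≤ fA (Fin.snoc (fun k => α k.castSucc (v k)) (α (Fin.last m) xC)) j.castSucc :=
              hfA (snoc_le_snoc' le_rfl hx) j.castSucc
          _ = fA (fun k => α k ((Fin.snoc v xC : Fin (m+1) → C) k)) j.castSucc := by rw [hexch]
          _ ≤ α j.castSucc (fC (Fin.snoc v xC) j.castSucc) := hcompl _ _
      · intro j hj
        exact hν j.castSucc hj
    -- monotonicity of solPrev and g
    have hspCm : ∀ x x' : C, x ≤ x' → solPrevC x ≤ solPrevC x' := by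
      intro x x' hx
      apply eqSol_mono'
      · intro v v' hv j
        exact hfC (snoc_le_snoc' hv le_rfl) j.castSucc
      · intro v j
        exact hfC (snoc_le_snoc' le_rfl hx) j.castSucc
    have hspAm : ∀ x x' : A, x ≤ x' → solPrevA x ≤ solPrevA x' := by
      intro x x' hx
      apply eqSol_mono'
      · intro v v' hv j
        exact hfA (snoc_le_snoc' hv le_rfl) j.castSucc
      · intro v j
        exact hfA (snoc_le_snoc' le_rfl hx) j.castSucc
    have hgCm : Monotone gC := fun x x' hx => hfC (snoc_le_snoc' (hspCm x x' hx) hx) _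
    have hgAm : Monotone gA := fun x x' hx => hfA (snoc_le_snoc' (hspAm x x' hx) hx) _
    have hgstep : ∀ c : C, gA (α (Fin.last m) c) ≤ α (Fin.last m) (gC c) := by
      intro c
      calc gA (α (Fin.last m) c)
          = fA (Fin.snoc (solPrevA (α (Fin.last m) c)) (α (Fin.last m) c)) (Fin.last m) := rfl
        _ ≤ fA (Fin.snoc (fun k => α k.castSucc (solPrevC c k)) (α (Fin.last m) c))
              (Fin.last m) :=
            hfA (snoc_le_snoc' (IHsub c (α (Fin.last m) c) le_rfl) le_rfl) _
        _ = fA (fun k => α k ((Fin.snoc (solPrevC c) c : Fin (m+1) → C) k)) (Fin.last m) := by rw [hexch]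
        _ ≤ α (Fin.last m) (fC (Fin.snoc (solPrevC c) c) (Fin.last m)) := hcompl _ _
        _ = α (Fin.last m) (gC c) := rfl
    have hslast :
        (match η (Fin.last m) with
         | EqMarker.mu => muFix gA
         | EqMarker.nu => nuFix gA) ≤ α (Fin.last m)
        (match η (Fin.last m) with
         | EqMarker.mu => muFix gC
         | EqMarker.nu => nuFix gC) := by
      cases hηl : η (Fin.last m)
      · refine muFix_le_of_prefix ?_
        exact (hgstep (muFix gC)).trans (hαm _ (prefix_muFix hgCm))
      · exact nuFix_le_alpha' hgCm hgAm (hν _ hηl).1 (hν _ hηl).2 hgstep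
    intro i
    induction i using Fin.lastCases with
    | last => simpa using hslast
    | cast j => simpa using IHsub _ _ hslast j

/-- Abstraction via Galois connections, completeness for the abstraction: if
`f^A ∘ Πα ≤ Πα ∘ f^C` pointwise and each `α_i` with `η_i = ν` is co-continuous
and co-strict, then `s^A ≤ Πα(s^C)`. -/
theorem galois_completeness_abstraction_for_systems
    {C A : Type*} [CompleteLattice C] [CompleteLattice A]
    (m : ℕ) (fC : (Fin m → C) → Fin m → C) (fA : (Fin m → A) → Fin m → A)
    (hfC : Monotone fC) (hfA : Monotone fA)
    (η : Fin m → EqMarker)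
    (α : Fin m → C → A) (γ : Fin m → A → C)
    (hgc : ∀ i, GaloisConnection (α i) (γ i))
    (hcompl : ∀ (v : Fin m → C) (i : Fin m), fA (fun j => α j (v j)) i ≤ α i (fC v i))
    (hν : ∀ i, η i = EqMarker.nu → CodirContinuous (α i) ∧ TopStrict (α i)) :
    ∀ i, eqSol m fA η i ≤ α i (eqSol m fC η i) :=
  galois_key m fC fA hfC hfA η α (fun i => (hgc i).monotone_l) hcompl hν
end

section
/- Let (C, ⊑) and (A, ≤) be complete lattices, let E_C : x =_η f^C(x) and E_A : x =_η f^A(x) be systems of m fixpoint equations over C and A with the same markers and with solutions s^C ∈ C^m and s^A ∈ A^m, and let ⟨α_i, γ_i⟩ : C → A be Galois connections for i = 1,…,m. If Πγ ∘ f^A ⊑ f^C ∘ Πγ (pointwise) and γ_i is continuous and strict for each index i with η_i = μ, then Πγ(s^A) ⊑ s^C. -/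
/-! ### Auxiliary definitions mirroring the recursive structure of `eqSol` -/

/-- Solution of the first `m` equations with the last variable fixed to `x`. -/
def solPrev {L : Type*} [CompleteLattice L] (m : ℕ)
    (f : (Fin (m + 1) → L) → Fin (m + 1) → L) (η : Fin (m + 1) → EqMarker)
    (x : L) : Fin m → L :=
  eqSol m (fun v j => f (Fin.snoc v x) j.castSucc) (fun j => η j.castSucc)

/-- The one-variable function obtained after solving the first `m` equations. -/
def stepFun {L : Type*} [CompleteLattice L] (m : ℕ)
    (f : (Fin (m + 1) → L) → Fin (m + 1) → L) (η : Fin (m + 1) → EqMarker)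
    (x : L) : L :=
  f (Fin.snoc (solPrev m f η x) x) (Fin.last m)

/-- The solution of the last equation. -/
def sLast {L : Type*} [CompleteLattice L] (m : ℕ)
    (f : (Fin (m + 1) → L) → Fin (m + 1) → L) (η : Fin (m + 1) → EqMarker) : L :=
  match η (Fin.last m) with
  | EqMarker.mu => muFix (stepFun m f η)
  | EqMarker.nu => nuFix (stepFun m f η)

lemma eqSol_succ {L : Type*} [CompleteLattice L] (m : ℕ)
    (f : (Fin (m + 1) → L) → Fin (m + 1) → L) (η : Fin (m + 1) → EqMarker) :
    eqSol (m + 1) f η = Fin.snoc (solPrev m f η (sLast m f η)) (sLast m f η) := rfl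

lemma snoc_mono {L : Type*} [Preorder L] {m : ℕ} {v w : Fin m → L} {x y : L}
    (h : ∀ j, v j ≤ w j) (hxy : x ≤ y) : Fin.snoc v x ≤ (Fin.snoc w y : Fin (m+1) → L) := by
  intro j
  refine Fin.lastCases ?_ ?_ j
  · simpa using hxy
  · intro i; simpa using h i

lemma muFix_le_muFix {L : Type*} [CompleteLattice L] {f g : L → L} (h : ∀ x, f x ≤ g x) :
    muFix f ≤ muFix g :=
  sInf_le_sInf (fun x hx => le_trans (h x) hx)

lemma nuFix_le_nuFix {L : Type*} [CompleteLattice L] {f g : L → L} (h : ∀ x, f x ≤ g x) :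
    nuFix f ≤ nuFix g :=
  sSup_le_sSup (fun x hx => le_trans hx (h x))

/-- `eqSol` is monotone in the system of functions (the larger one being monotone). -/
lemma eqSol_mono_fun {L : Type*} [CompleteLattice L] (m : ℕ) :
    ∀ (f g : (Fin m → L) → Fin m → L) (η : Fin m → EqMarker),
    (∀ v i, f v i ≤ g v i) → Monotone g → ∀ i, eqSol m f η i ≤ eqSol m g η i := by
  induction m with
  | zero => intro f g η _ _ i; exact i.elim0
  | succ m ih =>
    intro f g η hfg hg
    have hgRes : ∀ x : L, Monotone (fun (v : Fin m → L) (j : Fin m) => g (Fin.snoc v x) j.castSucc) :=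
      fun x v w hvw j => hg (snoc_mono (fun k => hvw k) le_rfl) _
    have hPrev : ∀ x j, solPrev m f η x j ≤ solPrev m g η x j :=
      fun x => ih (fun v j => f (Fin.snoc v x) j.castSucc)
        (fun v j => g (Fin.snoc v x) j.castSucc) (fun j => η j.castSucc)
        (fun v j => hfg _ _) (hgRes x)
    have hPrevMono : ∀ x y : L, x ≤ y → ∀ j, solPrev m g η x j ≤ solPrev m g η y j :=
      fun x y hxy => ih (fun v j => g (Fin.snoc v x) j.castSucc)
        (fun v j => g (Fin.snoc v y) j.castSucc) (fun j => η j.castSucc)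
        (fun v j => hg (snoc_mono (fun _ => le_rfl) hxy) _) (hgRes y)
    have hstep : ∀ x, stepFun m f η x ≤ stepFun m g η x := by
      intro x
      exact le_trans (hfg _ _) (hg (snoc_mono (fun j => hPrev x j) le_rfl) _)
    have hslast : sLast m f η ≤ sLast m g η := by
      unfold sLast
      cases η (Fin.last m) with
      | mu => exact muFix_le_muFix hstep
      | nu => exact nuFix_le_nuFix hstep
    intro i
    rw [eqSol_succ, eqSol_succ]
    refine Fin.lastCases ?_ ?_ i
    · simpa using hslast
    · intro j
      simp only [Fin.snoc_castSucc]
      exact le_trans (hPrev _ j) (hPrevMono _ _ hslast j)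

/-- `solPrev` is monotone in the parameter. -/
lemma solPrev_mono {L : Type*} [CompleteLattice L] (m : ℕ)
    (f : (Fin (m + 1) → L) → Fin (m + 1) → L) (η : Fin (m + 1) → EqMarker)
    (hf : Monotone f) {x y : L} (hxy : x ≤ y) (j : Fin m) :
    solPrev m f η x j ≤ solPrev m f η y j :=
  eqSol_mono_fun m (fun v j => f (Fin.snoc v x) j.castSucc)
    (fun v j => f (Fin.snoc v y) j.castSucc) (fun j => η j.castSucc)
    (fun v j => hf (snoc_mono (fun _ => le_rfl) hxy) _)
    (fun v w hvw j => hf (snoc_mono (fun k => hvw k) le_rfl) _) j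

lemma stepFun_mono {L : Type*} [CompleteLattice L] (m : ℕ)
    (f : (Fin (m + 1) → L) → Fin (m + 1) → L) (η : Fin (m + 1) → EqMarker)
    (hf : Monotone f) : Monotone (stepFun m f η) := by
  intro x y hxy
  exact hf (snoc_mono (fun j => solPrev_mono m f η hf hxy j) hxy) _

open OrdinalApprox Cardinal Order in
/-- Scalar case, least fixpoints: with `γ` continuous and strict. -/
lemma gamma_lfp_le {C A : Type*} [CompleteLattice C] [CompleteLattice A]
    (gC : C →o C) (gA : A →o A) (γ : A → C)
    (hcont : DirContinuous γ) (hstrict : BotStrict γ)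
    (hcomm : ∀ x, γ (gA x) ≤ gC (γ x)) : γ (OrderHom.lfp gA) ≤ OrderHom.lfp gC := by
  have key : ∀ a : Ordinal, γ (lfpApprox gA ⊥ a) ≤ OrderHom.lfp gC := by
    intro a
    induction a using Ordinal.induction with
    | h a ih =>
      rw [lfpApprox]
      set S : Set A := {y | ∃ b, ∃ _ : b < a, gA (lfpApprox gA ⊥ b) = y} ∪ {⊥} with hS
      have hne : S.Nonempty := ⟨⊥, Or.inr rfl⟩
      have hdir : DirectedOn (· ≤ ·) S := by
        rintro x hx y hy
        rcases hx with ⟨b, hb, rfl⟩ | hx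
        · rcases hy with ⟨c, hc, rfl⟩ | hy
          · rcases le_total b c with h | h
            · exact ⟨_, Or.inl ⟨c, hc, rfl⟩, gA.monotone (lfpApprox_mono_right gA (x := ⊥) h), le_rfl⟩
            · exact ⟨_, Or.inl ⟨b, hb, rfl⟩, le_rfl, gA.monotone (lfpApprox_mono_right gA (x := ⊥) h)⟩
          · refine ⟨_, Or.inl ⟨b, hb, rfl⟩, le_rfl, ?_⟩
            rcases hy with rfl; exact bot_le
        · rcases hx with rfl
          exact ⟨y, hy, bot_le, le_rfl⟩
      have hSup : (⊥ ⊔ ⨆ b, ⨆ (_ : b < a), gA (lfpApprox gA ⊥ b)) = sSup S := by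
        rw [hS, sSup_union, sSup_singleton, sup_comm]
        congr 1
        apply le_antisymm
        · exact iSup₂_le fun b hb => le_sSup ⟨b, hb, rfl⟩
        · exact sSup_le (by
            rintro _ ⟨b, hb, rfl⟩
            exact le_iSup₂ (f := fun b (_ : b < a) => gA (lfpApprox gA ⊥ b)) b hb)
      rw [hSup, hcont S hne hdir]
      apply sSup_le
      rintro c ⟨y, hy, rfl⟩
      rcases hy with ⟨b, hb, rfl⟩ | hy
      · exact le_trans (hcomm _) (le_trans (gC.monotone (ih b hb)) (OrderHom.map_lfp gC).le)
      · rcases hy with rfl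
        rw [hstrict]
        exact bot_le
  rw [← lfpApprox_ord_eq_lfp gA]
  exact key _

/-- Scalar case, greatest fixpoints: only monotonicity of `γ` needed. -/
lemma gamma_gfp_le {C A : Type*} [CompleteLattice C] [CompleteLattice A]
    (gC : C →o C) (gA : A →o A) (γ : A → C) (hm : Monotone γ)
    (hcomm : ∀ x, γ (gA x) ≤ gC (γ x)) : γ (OrderHom.gfp gA) ≤ OrderHom.gfp gC := by
  apply OrderHom.le_gfp
  calc γ (OrderHom.gfp gA) = γ (gA (OrderHom.gfp gA)) := by rw [gA.map_gfp]
    _ ≤ gC (γ (OrderHom.gfp gA)) := hcomm _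

/-- The main induction. -/
lemma galois_completeness_aux {C A : Type*} [CompleteLattice C] [CompleteLattice A] :
    ∀ (m : ℕ) (fC : (Fin m → C) → Fin m → C) (fA : (Fin m → A) → Fin m → A),
    Monotone fC → Monotone fA → ∀ (η : Fin m → EqMarker) (γ : Fin m → A → C),
    (∀ i, Monotone (γ i)) →
    (∀ (v : Fin m → A) (i : Fin m), γ i (fA v i) ≤ fC (fun j => γ j (v j)) i) →
    (∀ i, η i = EqMarker.mu → DirContinuous (γ i) ∧ BotStrict (γ i)) →
    ∀ i, γ i (eqSol m fA η i) ≤ eqSol m fC η i := by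
  intro m
  induction m with
  | zero => intro fC fA _ _ η γ _ _ _ i; exact i.elim0
  | succ m ih =>
    intro fC fA hfC hfA η γ hγm hcompl hμ
    -- the restricted systems, parameterized by last variable
    have hsnocγ : ∀ (v : Fin m → A) (x : A),
        (fun j : Fin (m+1) => γ j ((Fin.snoc v x : Fin (m+1) → A) j)) =
          Fin.snoc (fun j : Fin m => γ j.castSucc (v j)) (γ (Fin.last m) x) := by
      intro v x
      funext j
      refine Fin.lastCases ?_ ?_ j
      · simp
      · intro k; simp
    have hPrev : ∀ x : A, ∀ j : Fin m,
        γ j.castSucc (solPrev m fA η x j) ≤ solPrev m fC η (γ (Fin.last m) x) j := by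
      intro x
      refine ih (fun v j => fC (Fin.snoc v (γ (Fin.last m) x)) j.castSucc)
        (fun v j => fA (Fin.snoc v x) j.castSucc)
        (fun v w hvw j => hfC (snoc_mono (fun k => hvw k) le_rfl) _)
        (fun v w hvw j => hfA (snoc_mono (fun k => hvw k) le_rfl) _)
        (fun j => η j.castSucc) (fun j => γ j.castSucc)
        (fun j => hγm j.castSucc) ?_ (fun j hj => hμ j.castSucc hj)
      intro v j
      have := hcompl (Fin.snoc v x) j.castSucc
      rw [hsnocγ v x] at this
      exact this
    -- commutation for the one-variable step functions
    have hcomm : ∀ x : A,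
        γ (Fin.last m) (stepFun m fA η x) ≤ stepFun m fC η (γ (Fin.last m) x) := by
      intro x
      have h1 := hcompl (Fin.snoc (solPrev m fA η x) x) (Fin.last m)
      rw [hsnocγ _ x] at h1
      refine le_trans h1 ?_
      exact hfC (snoc_mono (fun j => hPrev x j) le_rfl) _
    have hstepCm : Monotone (stepFun m fC η) := stepFun_mono m fC η hfC
    have hstepAm : Monotone (stepFun m fA η) := stepFun_mono m fA η hfA
    have hlast : γ (Fin.last m) (sLast m fA η) ≤ sLast m fC η := by
      unfold sLast
      cases hη : η (Fin.last m) with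
      | mu =>
        obtain ⟨hcont, hstrict⟩ := hμ (Fin.last m) hη
        exact gamma_lfp_le ⟨stepFun m fC η, hstepCm⟩ ⟨stepFun m fA η, hstepAm⟩
          (γ (Fin.last m)) hcont hstrict hcomm
      | nu =>
        exact gamma_gfp_le ⟨stepFun m fC η, hstepCm⟩ ⟨stepFun m fA η, hstepAm⟩
          (γ (Fin.last m)) (hγm _) hcomm
    intro i
    rw [eqSol_succ, eqSol_succ]
    refine Fin.lastCases ?_ ?_ i
    · simpa using hlast
    · intro j
      simp only [Fin.snoc_castSucc]
      refine le_trans (hPrev _ j) ?_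
      exact solPrev_mono m fC η hfC hlast j

/-- Abstraction via Galois connections, completeness for the concretisation:
if `Πγ ∘ f^A ⊑ f^C ∘ Πγ` pointwise and each `γ_i` with `η_i = μ` is continuous
and strict, then `Πγ(s^A) ⊑ s^C`. -/
theorem galois_completeness_concretisation_for_systems
    {C A : Type*} [CompleteLattice C] [CompleteLattice A]
    (m : ℕ) (fC : (Fin m → C) → Fin m → C) (fA : (Fin m → A) → Fin m → A)
    (hfC : Monotone fC) (hfA : Monotone fA)
    (η : Fin m → EqMarker)
    (α : Fin m → C → A) (γ : Fin m → A → C)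
    (hgc : ∀ i, GaloisConnection (α i) (γ i))
    (hcompl : ∀ (v : Fin m → A) (i : Fin m), γ i (fA v i) ≤ fC (fun j => γ j (v j)) i)
    (hμ : ∀ i, η i = EqMarker.mu → DirContinuous (γ i) ∧ BotStrict (γ i)) :
    ∀ i, γ i (eqSol m fA η i) ≤ eqSol m fC η i :=
  galois_completeness_aux m fC fA hfC hfA η γ (fun i => (hgc i).monotone_u) hcompl hμ
end
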